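/- arXiv:2312.14823 — 2 statements merged into one kernel-verified Lean document; each statement's English description precedes it below -/
import Mathlib

section
/- Let ħ > 0, let Σ be a real symmetric positive definite 2n×2n matrix, and let Ω_Σ = {z ∈ ℝ^{2n} : (1/2) Σ⁻¹ z·z ≤ 1}. Then Ω_Σ^{ħ,ω} = Ω_Σ if and only if there exists S ∈ Sp(n) such that Ω_Σ = S(B^{2n}(√ħ)), i.e. if and only if Ω_Σ is a quantum blob. -/
open Matrix ComplexOrder MeasureTheory

noncomputable section

/-- Phase space ℝ^{2n} ≃ ℝⁿ × ℝⁿ, with coordinates z = (x,p). -/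
abbrev PS (n : ℕ) := Fin n ⊕ Fin n → ℝ

/-- The standard symplectic matrix J = [[0, I], [-I, 0]]. -/
def Jmat (n : ℕ) : Matrix (Fin n ⊕ Fin n) (Fin n ⊕ Fin n) ℝ :=
  Matrix.fromBlocks 0 1 (-1) 0

/-- The standard symplectic form ω(z,z′) = (Jz)·z′. -/
def symp (n : ℕ) (z z' : PS n) : ℝ := (Jmat n).mulVec z ⬝ᵥ z'

/-- The symplectic group Sp(n) = {S : SᵀJS = J}. -/
def Sp (n : ℕ) : Set (Matrix (Fin n ⊕ Fin n) (Fin n ⊕ Fin n) ℝ) :=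
  {S | Sᵀ * Jmat n * S = Jmat n}

/-- Symplectic ℏ-polar dual Ω^{ℏ,ω} = {z′ : sup_{z∈Ω} ω(z,z′) ≤ ℏ}. -/
def sympDual (n : ℕ) (ℏ : ℝ) (Ω : Set (PS n)) : Set (PS n) :=
  {z' | ∀ z ∈ Ω, symp n z z' ≤ ℏ}

/-- The closed Euclidean ball B^{2n}(√ℏ) of radius √ℏ centered at 0. -/
def ball2n (n : ℕ) (ℏ : ℝ) : Set (PS n) := {z | z ⬝ᵥ z ≤ ℏ}

/-- The covariance ellipsoid Ω_Σ = {z : (1/2)Σ⁻¹z·z ≤ 1}. -/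
def covEll (n : ℕ) (Sig : Matrix (Fin n ⊕ Fin n) (Fin n ⊕ Fin n) ℝ) : Set (PS n) :=
  {z | (1 / 2 : ℝ) * (Sig⁻¹.mulVec z ⬝ᵥ z) ≤ 1}

/-!
Write `Ω_Σ` as the ellipsoid `{z | zᵀ M⁻¹ z ≤ 1}` with `M = 2Σ`. By Cauchy–Schwarz for the inner
product of `M⁻¹`, with equality at `z ∝ M u`, its support function is `u ↦ √(uᵀ M u)`; hence its
`ℏ`-polar dual is the ellipsoid of `ℏ² M⁻¹`, and its symplectic dual, the image of that under `J`,
is the ellipsoid of `ℏ² J M⁻¹ Jᵀ`. Support functions also show that an ellipsoid determines its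
matrix, so `Ω_Σ` is self-dual iff `G = ℏ⁻¹ M` satisfies `J G⁻¹ Jᵀ = G`, i.e. iff `G` is symplectic.
On the other side `S(B(√ℏ))` is the ellipsoid of `ℏ S Sᵀ`, and a positive definite symplectic `G`
is `S Sᵀ` with `S = √G` symplectic: `Jᵀ (√G)⁻¹ J` is a positive square root of `Jᵀ G⁻¹ J = G`.
-/

open scoped MatrixOrder

section Ellipsoid

variable {ι : Type*}

theorem Matrix.PosSemidef.transpose_eq_self {M : Matrix ι ι ℝ} (hM : M.PosSemidef) : Mᵀ = M :=
  (isHermitian_iff_isSymm.mp hM.isHermitian).eq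

variable [Fintype ι]

theorem Matrix.dotProduct_mulVec_mul_mul_transpose (A B : Matrix ι ι ℝ) (x : ι → ℝ) :
    x ⬝ᵥ (A * B * Aᵀ) *ᵥ x = (Aᵀ *ᵥ x) ⬝ᵥ B *ᵥ (Aᵀ *ᵥ x) := by
  rw [← mulVec_mulVec, ← mulVec_mulVec, dotProduct_mulVec, ← mulVec_transpose]

variable [DecidableEq ι]

theorem Matrix.inv_smul₀ {K : Type*} [Field K] {c : K} (hc : c ≠ 0) (A : Matrix ι ι K) :
    (c • A)⁻¹ = c⁻¹ • A⁻¹ := by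
  by_cases hA : IsUnit A.det
  · simpa [Units.smul_def] using inv_smul' A (Units.mk0 c hc) hA
  · have hcA : ¬IsUnit (c • A).det := by
      rwa [det_smul, IsUnit.mul_iff, and_iff_right ((Ne.isUnit hc).pow _)]
    rw [nonsing_inv_apply_not_isUnit _ hA, nonsing_inv_apply_not_isUnit _ hcA, smul_zero]

theorem Matrix.PosDef.mul_mul_transpose_of_isUnit_det {A U : Matrix ι ι ℝ} (hA : A.PosDef)
    (hU : IsUnit U.det) : (U * A * Uᵀ).PosDef := by
  have := ((isUnit_iff_isUnit_det U).mpr hU).posDef_star_right_conjugate_iff.mpr hA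
  rwa [star_eq_conjTranspose, conjTranspose_eq_transpose_of_trivial] at this

def ellipsoid (M : Matrix ι ι ℝ) : Set (ι → ℝ) := {z | z ⬝ᵥ M⁻¹ *ᵥ z ≤ 1}

theorem Matrix.PosDef.forall_mem_ellipsoid_dotProduct_le_iff {M : Matrix ι ι ℝ} (hM : M.PosDef)
    {c : ℝ} (hc : 0 < c) (u : ι → ℝ) :
    (∀ z ∈ ellipsoid M, z ⬝ᵥ u ≤ c) ↔ u ⬝ᵥ M *ᵥ u ≤ c ^ 2 := by
  have hdet : IsUnit M.det := hM.det_pos.ne'.isUnit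
  have hMinv_mul (v : ι → ℝ) : (M *ᵥ u) ⬝ᵥ M⁻¹ *ᵥ v = u ⬝ᵥ v := by
    rw [dotProduct_mulVec, ← vecMul_transpose, hM.posSemidef.transpose_eq_self,
      vecMul_vecMul, mul_nonsing_inv _ hdet, vecMul_one]
  have hmul_Minv (z : ι → ℝ) : z ⬝ᵥ M⁻¹ *ᵥ (M *ᵥ u) = z ⬝ᵥ u := by
    rw [mulVec_mulVec, nonsing_inv_mul _ hdet, one_mulVec]
  set d := u ⬝ᵥ M *ᵥ u with hd
  have hd0 : 0 ≤ d := by simpa using hM.posSemidef.dotProduct_mulVec_nonneg u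
  constructor
  · -- `z = M u / √d` attains the bound
    intro h
    have hz : (√d)⁻¹ • (M *ᵥ u) ∈ ellipsoid M := by
      simp only [ellipsoid, Set.mem_ofPred_eq, mulVec_smul, dotProduct_smul, smul_dotProduct,
        hMinv_mul, smul_eq_mul, ← hd]
      rw [← mul_assoc, ← mul_inv, ← sq, Real.sq_sqrt hd0]
      exact inv_mul_le_one
    have := h _ hz
    rw [smul_dotProduct, smul_eq_mul, dotProduct_comm, ← hd, inv_mul_eq_div, Real.div_sqrt] at this
    exact (Real.sqrt_le_left hc.le).mp this
  · intro h z hz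
    have hsq : 0 ≤ (c • z - M *ᵥ u) ⬝ᵥ M⁻¹ *ᵥ (c • z - M *ᵥ u) := by
      simpa using hM.inv.posSemidef.dotProduct_mulVec_nonneg (c • z - M *ᵥ u)
    simp only [mulVec_sub, mulVec_smul, sub_dotProduct, dotProduct_sub, smul_dotProduct,
      dotProduct_smul, hMinv_mul, hmul_Minv, smul_eq_mul] at hsq
    rw [dotProduct_comm u z, dotProduct_comm (M *ᵥ u) u, ← hd] at hsq
    have hq : z ⬝ᵥ M⁻¹ *ᵥ z ≤ 1 := hz
    have : c * (z ⬝ᵥ u) ≤ c * c := by nlinarith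
    exact le_of_mul_le_mul_left this hc

theorem Matrix.PosDef.le_of_ellipsoid_subset {M N : Matrix ι ι ℝ} (hM : M.PosDef) (hN : N.PosDef)
    (h : ellipsoid M ⊆ ellipsoid N) : M ≤ N := by
  rw [Matrix.le_iff]
  refine .of_dotProduct_mulVec_nonneg (hN.isHermitian.sub hM.isHermitian) fun u => ?_
  rw [star_trivial, sub_mulVec, dotProduct_sub, sub_nonneg]
  refine le_of_forall_pos_le_add fun ε hε => ?_
  have hNu : 0 ≤ u ⬝ᵥ N *ᵥ u := by simpa using hN.posSemidef.dotProduct_mulVec_nonneg u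
  set c := √(u ⬝ᵥ N *ᵥ u + ε)
  have hc : 0 < c := Real.sqrt_pos.mpr (by positivity)
  have hc2 : c ^ 2 = u ⬝ᵥ N *ᵥ u + ε := Real.sq_sqrt (by positivity)
  rw [← hc2]
  exact (hM.forall_mem_ellipsoid_dotProduct_le_iff hc u).mp fun z hz =>
    (hN.forall_mem_ellipsoid_dotProduct_le_iff hc u).mpr (by linarith) z (h hz)

theorem Matrix.PosDef.ellipsoid_inj {M N : Matrix ι ι ℝ} (hM : M.PosDef) (hN : N.PosDef) :
    ellipsoid M = ellipsoid N ↔ M = N :=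
  ⟨fun h => le_antisymm (hM.le_of_ellipsoid_subset hN h.le) (hN.le_of_ellipsoid_subset hM h.ge),
    congrArg ellipsoid⟩

theorem image_mulVec_ellipsoid {S : Matrix ι ι ℝ} (hS : IsUnit S.det) (M : Matrix ι ι ℝ) :
    S.mulVec '' ellipsoid M = ellipsoid (S * M * Sᵀ) := by
  have hinv : (S * M * Sᵀ)⁻¹ = S⁻¹ᵀ * M⁻¹ * S⁻¹ᵀᵀ := by
    rw [Matrix.mul_inv_rev, Matrix.mul_inv_rev, transpose_transpose, transpose_nonsing_inv,
      Matrix.mul_assoc]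
  rw [Set.image_eq_preimage_of_inverse (g := S⁻¹.mulVec)
    (fun z => by rw [mulVec_mulVec, nonsing_inv_mul _ hS, one_mulVec])
    (fun z => by rw [mulVec_mulVec, mul_nonsing_inv _ hS, one_mulVec])]
  ext z
  rw [Set.mem_preimage, ellipsoid, ellipsoid, Set.mem_ofPred_eq, Set.mem_ofPred_eq, hinv,
    dotProduct_mulVec_mul_mul_transpose, transpose_transpose]

theorem ellipsoid_smul_inv {M : Matrix ι ι ℝ} (hM : IsUnit M.det) {c : ℝ} (hc : 0 < c) :
    ellipsoid (c • M⁻¹) = {z | z ⬝ᵥ M *ᵥ z ≤ c} := by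
  ext z
  simp only [ellipsoid, Set.mem_ofPred_eq, inv_smul₀ hc.ne', nonsing_inv_nonsing_inv _ hM,
    smul_mulVec, dotProduct_smul, smul_eq_mul, inv_mul_le_iff₀ hc, mul_one]

end Ellipsoid

section PhaseSpace

open SymplecticGroup

variable {n : ℕ}

theorem Jmat_eq_neg_J (n : ℕ) : Jmat n = -J (Fin n) ℝ := by
  simp [Jmat, J, fromBlocks_neg]

theorem Jmat_mul_transpose_self (n : ℕ) : Jmat n * (Jmat n)ᵀ = 1 := by
  rw [Jmat_eq_neg_J, transpose_neg, J_transpose, neg_neg, Matrix.neg_mul, J_squared, neg_neg]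

theorem Jmat_transpose_mul_self (n : ℕ) : (Jmat n)ᵀ * Jmat n = 1 :=
  mul_eq_one_comm.mp (Jmat_mul_transpose_self n)

theorem mem_Sp_iff {S : Matrix (Fin n ⊕ Fin n) (Fin n ⊕ Fin n) ℝ} :
    S ∈ Sp n ↔ S ∈ symplecticGroup (Fin n) ℝ := by
  rw [mem_iff', Sp, Set.mem_ofPred_eq, Jmat_eq_neg_J, Matrix.mul_neg, Matrix.neg_mul, neg_inj]

theorem Matrix.PosSemidef.sqrt_mem_symplecticGroup {l : Type*} [Fintype l] [DecidableEq l]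
    {G : Matrix (l ⊕ l) (l ⊕ l) ℝ} (hG : G.PosSemidef) (hGs : G ∈ symplecticGroup l ℝ) :
    CFC.sqrt G ∈ symplecticGroup l ℝ := by
  set P := CFC.sqrt G
  have hP : P.PosSemidef := nonneg_iff_posSemidef.mp (CFC.sqrt_nonneg G)
  have hPP : P * P = G := CFC.sqrt_mul_sqrt_self G hG.nonneg
  have hPdet : IsUnit P.det := by
    have := symplectic_det hGs
    rw [← hPP, det_mul] at this
    exact isUnit_of_mul_isUnit_left this
  have hJJ : (J l ℝ)ᵀ * J l ℝ = 1 := by rw [J_transpose, Matrix.neg_mul, J_squared, neg_neg]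
  have hGinv : (J l ℝ)ᵀ * G⁻¹ * J l ℝ = G := by
    rw [inv_eq_symplectic_inv G hGs, hG.transpose_eq_self, J_transpose]
    simp only [← Matrix.mul_assoc, Matrix.neg_mul, Matrix.mul_neg, neg_neg, J_squared]
    simp only [Matrix.mul_assoc, J_squared, Matrix.mul_neg, Matrix.mul_one, Matrix.one_mul,
      neg_neg]
  have hconj : (J l ℝ)ᵀ * P⁻¹ * J l ℝ = P := by
    refine (CFC.sqrt_unique ?_ ?_).symm
    · calc (J l ℝ)ᵀ * P⁻¹ * J l ℝ * ((J l ℝ)ᵀ * P⁻¹ * J l ℝ)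
          = (J l ℝ)ᵀ * (P * P)⁻¹ * J l ℝ := by
            simp only [Matrix.mul_inv_rev, Matrix.mul_assoc]
            rw [← Matrix.mul_assoc (J l ℝ), mul_eq_one_comm.mp hJJ, Matrix.one_mul]
        _ = G := by rw [hPP, hGinv]
    · have := hP.inv.conjTranspose_mul_mul_same (J l ℝ)
      rwa [conjTranspose_eq_transpose_of_trivial, ← nonneg_iff_posSemidef] at this
  rw [mem_iff, hP.transpose_eq_self]
  calc P * J l ℝ * P = P * J l ℝ * ((J l ℝ)ᵀ * P⁻¹ * J l ℝ) := by rw [hconj]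
    _ = J l ℝ := by
      simp only [Matrix.mul_assoc]
      rw [← Matrix.mul_assoc (J l ℝ), mul_eq_one_comm.mp hJJ, Matrix.one_mul,
        ← Matrix.mul_assoc, mul_nonsing_inv _ hPdet, Matrix.one_mul]

theorem conj_inv_eq_self_iff_mem_Sp {G : Matrix (Fin n ⊕ Fin n) (Fin n ⊕ Fin n) ℝ}
    (hG : G.PosDef) : Jmat n * G⁻¹ * (Jmat n)ᵀ = G ↔ G ∈ Sp n := by
  have hdet : IsUnit G.det := hG.det_pos.ne'.isUnit
  rw [Sp, Set.mem_ofPred_eq, hG.posSemidef.transpose_eq_self]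
  constructor
  · intro h
    calc G * Jmat n * G = Jmat n * G⁻¹ * (Jmat n)ᵀ * Jmat n * G := by rw [h]
      _ = Jmat n := by
        rw [Matrix.mul_assoc (Jmat n * G⁻¹), Jmat_transpose_mul_self, Matrix.mul_one,
          Matrix.mul_assoc, nonsing_inv_mul _ hdet, Matrix.mul_one]
  · intro h
    calc Jmat n * G⁻¹ * (Jmat n)ᵀ = G * Jmat n * G * G⁻¹ * (Jmat n)ᵀ := by rw [h]
      _ = G := by
        rw [Matrix.mul_assoc (G * Jmat n), mul_nonsing_inv _ hdet, Matrix.mul_one,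
          Matrix.mul_assoc, Jmat_mul_transpose_self, Matrix.mul_one]

theorem exists_mem_Sp_mul_transpose_eq_iff {G : Matrix (Fin n ⊕ Fin n) (Fin n ⊕ Fin n) ℝ}
    (hG : G.PosSemidef) : (∃ S ∈ Sp n, G = S * Sᵀ) ↔ G ∈ Sp n := by
  simp only [mem_Sp_iff]
  constructor
  · rintro ⟨S, hS, rfl⟩
    exact mul_mem hS (SymplecticGroup.transpose_mem hS)
  · intro hGs
    refine ⟨CFC.sqrt G, hG.sqrt_mem_symplecticGroup hGs, ?_⟩
    rw [(nonneg_iff_posSemidef.mp (CFC.sqrt_nonneg G)).transpose_eq_self,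
      CFC.sqrt_mul_sqrt_self G hG.nonneg]

theorem symp_eq_dotProduct (z w : PS n) : symp n z w = z ⬝ᵥ (Jmat n)ᵀ *ᵥ w := by
  rw [symp, dotProduct_comm, dotProduct_mulVec, ← mulVec_transpose, dotProduct_comm]

theorem sympDual_eq_image (c : ℝ) (Ω : Set (PS n)) :
    sympDual n c Ω = (Jmat n).mulVec '' {u | ∀ z ∈ Ω, z ⬝ᵥ u ≤ c} := by
  rw [Set.image_eq_preimage_of_inverse (g := (Jmat n)ᵀ.mulVec)
    (fun z => by rw [mulVec_mulVec, Jmat_transpose_mul_self, one_mulVec])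
    (fun z => by rw [mulVec_mulVec, Jmat_mul_transpose_self, one_mulVec])]
  ext w
  simp only [sympDual, Set.mem_preimage, Set.mem_ofPred_eq, symp_eq_dotProduct]

theorem covEll_eq_ellipsoid (Sig : Matrix (Fin n ⊕ Fin n) (Fin n ⊕ Fin n) ℝ) :
    covEll n Sig = ellipsoid ((2 : ℝ) • Sig) := by
  ext z
  simp only [covEll, ellipsoid, Set.mem_ofPred_eq, inv_smul₀ (two_ne_zero : (2 : ℝ) ≠ 0),
    smul_mulVec, dotProduct_smul, smul_eq_mul, one_div, dotProduct_comm z]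

theorem image_mulVec_ball2n {S : Matrix (Fin n ⊕ Fin n) (Fin n ⊕ Fin n) ℝ} (hS : IsUnit S.det)
    {c : ℝ} (hc : 0 < c) : S.mulVec '' ball2n n c = ellipsoid (c • (S * Sᵀ)) := by
  have hball : ball2n n c = ellipsoid (c • (1 : Matrix (Fin n ⊕ Fin n) (Fin n ⊕ Fin n) ℝ)⁻¹) := by
    rw [ellipsoid_smul_inv (by simp) hc]
    ext z
    simp [ball2n]
  rw [hball, inv_one, image_mulVec_ellipsoid hS, Matrix.mul_smul, Matrix.smul_mul, Matrix.mul_one]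

theorem sympDual_ellipsoid {M : Matrix (Fin n ⊕ Fin n) (Fin n ⊕ Fin n) ℝ} (hM : M.PosDef) {c : ℝ}
    (hc : 0 < c) :
    sympDual n c (ellipsoid M) = ellipsoid (c ^ 2 • (Jmat n * M⁻¹ * (Jmat n)ᵀ)) := by
  have hpolar : {u | ∀ z ∈ ellipsoid M, z ⬝ᵥ u ≤ c} = ellipsoid (c ^ 2 • M⁻¹) := by
    rw [ellipsoid_smul_inv (hM.det_pos.ne'.isUnit) (by positivity)]
    ext u
    exact hM.forall_mem_ellipsoid_dotProduct_le_iff hc u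
  rw [sympDual_eq_image, hpolar,
    image_mulVec_ellipsoid (isUnit_det_of_right_inverse (Jmat_mul_transpose_self n)),
    Matrix.mul_smul, Matrix.smul_mul]

theorem sq_smul_conj_inv_eq_self_iff {M : Matrix (Fin n ⊕ Fin n) (Fin n ⊕ Fin n) ℝ}
    (hM : M.PosDef) {c : ℝ} (hc : 0 < c) :
    c ^ 2 • (Jmat n * M⁻¹ * (Jmat n)ᵀ) = M ↔ c⁻¹ • M ∈ Sp n := by
  rw [← conj_inv_eq_self_iff_mem_Sp (hM.smul (inv_pos.mpr hc)), inv_smul₀ (inv_ne_zero hc.ne'),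
    inv_inv, Matrix.mul_smul, Matrix.smul_mul, eq_inv_smul_iff₀ hc.ne', smul_smul, ← sq]

end PhaseSpace

/-- The covariance ellipsoid equals its symplectic polar dual iff it is a quantum blob. -/
theorem sympDual_eq_iff_quantum_blob (n : ℕ) (ℏ : ℝ) (hℏ : 0 < ℏ)
    (Sig : Matrix (Fin n ⊕ Fin n) (Fin n ⊕ Fin n) ℝ) (hSig : Sig.PosDef) :
    sympDual n ℏ (covEll n Sig) = covEll n Sig ↔
      ∃ S ∈ Sp n, covEll n Sig = S.mulVec '' ball2n n ℏ := by
  have h2Sig : ((2 : ℝ) • Sig).PosDef := hSig.smul two_pos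
  have hdual : (ℏ ^ 2 • (Jmat n * ((2 : ℝ) • Sig)⁻¹ * (Jmat n)ᵀ)).PosDef :=
    (h2Sig.inv.mul_mul_transpose_of_isUnit_det
      (isUnit_det_of_right_inverse (Jmat_mul_transpose_self n))).smul (by positivity)
  rw [covEll_eq_ellipsoid, sympDual_ellipsoid h2Sig hℏ, hdual.ellipsoid_inj h2Sig,
    sq_smul_conj_inv_eq_self_iff h2Sig hℏ,
    ← exists_mem_Sp_mul_transpose_eq_iff (h2Sig.smul (inv_pos.mpr hℏ)).posSemidef]
  refine exists_congr fun S => and_congr_right fun hS => ?_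
  have hSdet : IsUnit S.det := SymplecticGroup.symplectic_det (mem_Sp_iff.mp hS)
  have hSS : (S * Sᵀ).PosDef := by
    simpa using PosDef.one.mul_mul_transpose_of_isUnit_det hSdet
  rw [image_mulVec_ball2n hSdet hℏ, h2Sig.ellipsoid_inj (hSS.smul hℏ), inv_smul_eq_iff₀ hℏ.ne']
end
end

section
/- Let (ℓ, ℓ′) be a Lagrangian frame in (ℝ^{2n}, ω) and let X_ℓ ⊆ ℓ be a centered ellipsoid in ℓ, i.e. X_ℓ = {z ∈ ℓ : q(z) ≤ ħ} for some positive definite quadratic form q on ℓ. Let (X_ℓ)_{ℓ′}^ħ = {z′ ∈ ℓ′ : sup_{z∈X_ℓ} ω(z, z′) ≤ ħ} be its Lagrangian polar dual, and let K = X_ℓ + (X_ℓ)_{ℓ′}^ħ = {z + z′ : z ∈ X_ℓ, z′ ∈ (X_ℓ)_{ℓ′}^ħ} (the product of the two ellipsoids under the splitting ℝ^{2n} = ℓ ⊕ ℓ′). Then there exists S ∈ Sp(n) such that the quantum blob S(B^{2n}(√ħ)) is contained in K, and every centered ellipsoid E = {z ∈ ℝ^{2n} : Qz·z ≤ ħ}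 (Q symmetric positive definite) contained in K has Lebesgue measure at most that of B^{2n}(√ħ). -/
open Matrix ComplexOrder MeasureTheory Pointwise

noncomputable section

/-- A Lagrangian subspace: an n-dimensional subspace on which ω vanishes identically. -/
def IsLagrangian (n : ℕ) (ℓ : Submodule ℝ (PS n)) : Prop :=
  Module.finrank ℝ ℓ = n ∧ ∀ z ∈ ℓ, ∀ z' ∈ ℓ, symp n z z' = 0
/-- Lagrangian polar dual (X)_{ℓ′}^ℏ = {z′ ∈ ℓ′ : sup_{z∈X} ω(z,z′) ≤ ℏ}. -/
def lagDual (n : ℕ) (ℏ : ℝ) (ℓ' : Submodule ℝ (PS n)) (X : Set (PS n)) : Set (PS n) :=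
  {z' | z' ∈ ℓ' ∧ ∀ z ∈ X, symp n z z' ≤ ℏ}

/-!
Take coordinates `x` on `ℓ` in which `q` is the sum of squares, and the coordinates `p` on `ℓ′`
dual to them under `ω` (so `ω(x, p) = -x·p`); since `ℓ` and `ℓ′` are Lagrangian, the matrix `S`
with these columns is symplectic. The Euclidean ball is its own polar, so in these coordinates
both `X_ℓ` and its Lagrangian dual are balls of radius `√ℏ`, and `K = S(Bⁿ(√ℏ) × Bⁿ(√ℏ))`, which
contains `S(B²ⁿ(√ℏ))`. Conversely, if `{Qz·z ≤ ℏ} ⊆ K` then `M = SᵀQS` defines an ellipsoid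
inside `Bⁿ × Bⁿ`, hence inside the cube `|z_k| ≤ √ℏ`; this forces `(M⁻¹)_kk ≤ 1`, so
`det M⁻¹ ≤ exp (tr M⁻¹ - 2n) ≤ 1`. As `det S = ±1`, `det Q = det M ≥ 1`, and the ellipsoid has
at most the volume of the ball.
-/

theorem Matrix.transpose_mul_mul_mulVec_dotProduct {R d : Type*} [CommSemiring R] [Fintype d]
    (A S : Matrix d d R) (v w : d → R) : (Sᵀ * A * S) *ᵥ v ⬝ᵥ w = A *ᵥ (S *ᵥ v) ⬝ᵥ S *ᵥ w := by
  rw [← mulVec_mulVec, ← mulVec_mulVec, mulVec_transpose, ← dotProduct_mulVec]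

theorem sq_le_dotProduct_self {ι : Type*} [Fintype ι] (x : ι → ℝ) (i : ι) :
    x i ^ 2 ≤ x ⬝ᵥ x := by
  rw [dotProduct, sq]
  exact Finset.single_le_sum (fun j _ => mul_self_nonneg (x j)) (Finset.mem_univ i)

theorem forall_dotProduct_le_iff {ι : Type*} [Fintype ι] {ℏ : ℝ} (hℏ : 0 < ℏ) (p : ι → ℝ) :
    (∀ x : ι → ℝ, x ⬝ᵥ x ≤ ℏ → x ⬝ᵥ p ≤ ℏ) ↔ p ⬝ᵥ p ≤ ℏ := by
  refine ⟨fun h => ?_, fun hp x hx => ?_⟩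
  · by_contra! hlt
    set P := p ⬝ᵥ p
    -- the witness `s • p` with `s = 2ℏ / (ℏ + P)` lies in the ball by AM-GM, and `s * P > ℏ`
    set s := 2 * ℏ / (ℏ + P)
    have hs : s * (ℏ + P) = 2 * ℏ := div_mul_cancel₀ _ (by linarith)
    have hsx := h (s • p) (by
      rw [smul_dotProduct, dotProduct_smul, smul_eq_mul, smul_eq_mul]
      nlinarith [sq_nonneg (ℏ - P), sq_nonneg s])
    rw [smul_dotProduct, smul_eq_mul] at hsx
    nlinarith
  · have := dotProduct_self_star_nonneg (x - p)
    simp only [star_trivial, sub_dotProduct, dotProduct_sub, dotProduct_comm p x] at this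
    linarith

theorem Matrix.PosSemidef.det_le_exp_trace_sub_card {d : Type*} [Fintype d] [DecidableEq d]
    {A : Matrix d d ℝ} (hA : A.PosSemidef) :
    A.det ≤ Real.exp (A.trace - Fintype.card d) := by
  rw [hA.1.det_eq_prod_eigenvalues, hA.1.trace_eq_sum_eigenvalues]
  simp only [RCLike.ofReal_real_eq_id, id]
  calc ∏ i, hA.1.eigenvalues i ≤ ∏ i, Real.exp (hA.1.eigenvalues i - 1) :=
        Finset.prod_le_prod (fun i _ => hA.eigenvalues_nonneg i)
          (fun i _ => by linarith [Real.add_one_le_exp (hA.1.eigenvalues i - 1)])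
    _ = Real.exp (∑ i, hA.1.eigenvalues i - Fintype.card d) := by
        rw [← Real.exp_sum, Finset.sum_sub_distrib]; simp

theorem Matrix.PosDef.one_le_det_of_ellipsoid_subset_cube {d : Type*} [Fintype d] [DecidableEq d]
    {ℏ : ℝ} {M : Matrix d d ℝ} (hM : M.PosDef) (hℏ : 0 < ℏ)
    (hbox : ∀ w : d → ℝ, M *ᵥ w ⬝ᵥ w ≤ ℏ → ∀ k, w k ^ 2 ≤ ℏ) : 1 ≤ M.det := by
  have hMdet := (isUnit_iff_isUnit_det M).mp hM.isUnit
  have hN := hM.inv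
  have hdiag : ∀ k, M⁻¹ k k ≤ 1 := by
    intro k
    have hNkk : 0 < M⁻¹ k k := by simpa using hN.diag_pos (i := k)
    -- the point `c • M⁻¹ eₖ` lies on the boundary of the ellipsoid, and its `k`-th coordinate
    -- squared is `ℏ * M⁻¹ k k`
    set c := Real.sqrt (ℏ / M⁻¹ k k)
    have hc : c * c = ℏ / M⁻¹ k k := Real.mul_self_sqrt (by positivity)
    have hMN : M *ᵥ (M⁻¹ *ᵥ Pi.single k 1) = Pi.single k 1 := by
      rw [mulVec_mulVec, mul_nonsing_inv _ hMdet, one_mulVec]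
    have hw := hbox (c • (M⁻¹ *ᵥ Pi.single k 1)) (by
      rw [mulVec_smul, hMN, smul_dotProduct, dotProduct_smul, single_dotProduct, smul_eq_mul,
        smul_eq_mul, one_mul, mulVec_single_one, ← mul_assoc, hc]
      exact (div_mul_cancel₀ _ hNkk.ne').le) k
    rw [Pi.smul_apply, mulVec_single_one, col_apply, smul_eq_mul, mul_pow, sq c, hc, sq,
      ← mul_assoc, div_mul_cancel₀ _ hNkk.ne'] at hw
    exact le_of_mul_le_mul_left (by linarith : ℏ * M⁻¹ k k ≤ ℏ * 1) hℏ
  have hdetN : M⁻¹.det ≤ 1 :=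
    calc M⁻¹.det ≤ Real.exp (M⁻¹.trace - Fintype.card d) := hN.posSemidef.det_le_exp_trace_sub_card
      _ ≤ Real.exp 0 := by
        gcongr
        rw [sub_nonpos, trace, ← nsmul_one, ← Finset.card_univ, ← Finset.sum_const]
        exact Finset.sum_le_sum fun k _ => hdiag k
      _ = 1 := Real.exp_zero
  have hprod : M.det * M⁻¹.det = 1 := by rw [← det_mul, mul_nonsing_inv _ hMdet, det_one]
  nlinarith [hN.det_pos]

open scoped MatrixOrder in
theorem volume_ellipsoid_le_of_one_le_det {d : Type*} [Fintype d] [DecidableEq d] (ℏ : ℝ)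
    {Q : Matrix d d ℝ} (hQ : Q.PosSemidef) (hdet : 1 ≤ Q.det) :
    volume {z : d → ℝ | Q *ᵥ z ⬝ᵥ z ≤ ℏ} ≤ volume {z : d → ℝ | z ⬝ᵥ z ≤ ℏ} := by
  obtain ⟨B, rfl⟩ := CStarAlgebra.nonneg_iff_eq_star_mul_self.mp hQ.nonneg
  rw [star_eq_conjTranspose, conjTranspose_eq_transpose_of_trivial] at hdet ⊢
  have hB : 1 ≤ B.det ^ 2 := by rwa [det_mul, det_transpose, ← sq] at hdet
  have hB0 : LinearMap.det (toLin' B) ≠ 0 := by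
    rw [LinearMap.det_toLin']; rintro h; norm_num [h] at hB
  have hset : {z : d → ℝ | (Bᵀ * B) *ᵥ z ⬝ᵥ z ≤ ℏ} = toLin' B ⁻¹' {z | z ⬝ᵥ z ≤ ℏ} := by
    ext z
    rw [Set.mem_ofPred_eq, dotProduct_comm, ← mulVec_mulVec, dotProduct_mulVec, vecMul_transpose]
    rfl
  rw [hset, Measure.addHaar_preimage_linearMap _ hB0]
  refine mul_le_of_le_one_left zero_le (ENNReal.ofReal_le_one.mpr ?_)
  rw [LinearMap.det_toLin', abs_inv]
  exact inv_le_one_of_one_le₀ (one_le_sq_iff_one_le_abs _ |>.mp hB)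

def sympBilin (n : ℕ) : PS n →ₗ[ℝ] PS n →ₗ[ℝ] ℝ :=
  LinearMap.mk₂ ℝ (symp n)
    (fun z z' w => by simp [symp, mulVec_add, add_dotProduct])
    (fun c z w => by simp [symp, mulVec_smul, smul_dotProduct])
    (fun z w w' => by simp [symp, dotProduct_add])
    (fun c z w => by simp [symp, dotProduct_smul])

@[simp]
theorem sympBilin_apply (n : ℕ) (z z' : PS n) : sympBilin n z z' = symp n z z' := rfl

theorem Jmat_mul_self (n : ℕ) : Jmat n * Jmat n = -1 := by
  simp [Jmat, fromBlocks_multiply, ← fromBlocks_one, fromBlocks_neg]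

theorem symp_eq_dotProduct_s14 (n : ℕ) (z z' : PS n) :
    symp n z z' = z ∘ Sum.inr ⬝ᵥ z' ∘ Sum.inl - z ∘ Sum.inl ⬝ᵥ z' ∘ Sum.inr := by
  simp [symp, Jmat, dotProduct, mulVec, Fintype.sum_sum_type, one_apply, sub_eq_add_neg]

theorem symp_swap (n : ℕ) (z z' : PS n) : symp n z' z = -symp n z z' := by
  simp only [symp_eq_dotProduct_s14, dotProduct_comm (z' ∘ _)]
  ring

theorem eq_zero_of_forall_symp_eq_zero {n : ℕ} {w : PS n} (h : ∀ z, symp n z w = 0) : w = 0 := by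
  have := h (-(Jmat n *ᵥ w))
  rw [symp, mulVec_neg, mulVec_mulVec, Jmat_mul_self, neg_mulVec, one_mulVec, neg_neg] at this
  exact dotProduct_self_eq_zero.mp this

theorem mem_Sp_of_forall_symp_mulVec {n : ℕ} {S : Matrix (Fin n ⊕ Fin n) (Fin n ⊕ Fin n) ℝ}
    (h : ∀ z z', symp n (S *ᵥ z) (S *ᵥ z') = symp n z z') : S ∈ Sp n := by
  refine ext_of_mulVec_single fun l => dotProduct_eq _ _ fun z => ?_
  rw [transpose_mul_mul_mulVec_dotProduct]
  exact h _ _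

theorem det_mul_self_eq_one_of_mem_Sp {n : ℕ} {S : Matrix (Fin n ⊕ Fin n) (Fin n ⊕ Fin n) ℝ}
    (hS : S ∈ Sp n) : S.det * S.det = 1 := by
  have hJ : (Jmat n).det ≠ 0 := fun h0 => by
    simpa [h0, det_neg] using congrArg det (Jmat_mul_self n)
  have := congrArg det hS
  rw [det_mul, det_mul, det_transpose] at this
  exact mul_right_cancel₀ hJ (by linarith)

namespace IsLagrangian

variable {n : ℕ} {ℓ ℓ' : Submodule ℝ (PS n)}

theorem sup_eq_top (hℓ : IsLagrangian n ℓ) (hℓ' : IsLagrangian n ℓ') (htrans : ℓ ⊓ ℓ' = ⊥) :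
    ℓ ⊔ ℓ' = ⊤ := by
  refine Submodule.eq_top_of_finrank_eq ?_
  have := Submodule.finrank_sup_add_finrank_inf_eq ℓ ℓ'
  rw [htrans, finrank_bot, add_zero, hℓ.1, hℓ'.1] at this
  simp [this]

theorem eq_zero_of_forall_symp_eq_zero (hℓ : IsLagrangian n ℓ) (hℓ' : IsLagrangian n ℓ')
    (htrans : ℓ ⊓ ℓ' = ⊥) {w : PS n} (hw : w ∈ ℓ') (h : ∀ z ∈ ℓ, symp n z w = 0) : w = 0 := by
  refine _root_.eq_zero_of_forall_symp_eq_zero fun z => ?_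
  obtain ⟨a, ha, b, hb, rfl⟩ :=
    Submodule.mem_sup.mp (sup_eq_top hℓ hℓ' htrans ▸ Submodule.mem_top : z ∈ ℓ ⊔ ℓ')
  rw [← sympBilin_apply, map_add, LinearMap.add_apply, sympBilin_apply, sympBilin_apply,
    h a ha, hℓ'.2 b hb w hw, add_zero]

theorem exists_linearEquiv_symp_eq_neg_dotProduct (hℓ : IsLagrangian n ℓ)
    (hℓ' : IsLagrangian n ℓ') (htrans : ℓ ⊓ ℓ' = ⊥) (φ : (Fin n → ℝ) ≃ₗ[ℝ] ℓ) :
    ∃ ψ : (Fin n → ℝ) ≃ₗ[ℝ] ℓ', ∀ x p, symp n (φ x) (ψ p) = -(x ⬝ᵥ p) := by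
  let L : ℓ' →ₗ[ℝ] Fin n → ℝ :=
    LinearMap.pi fun i => -(sympBilin n (φ (Pi.single i 1))).comp ℓ'.subtype
  have hL : ∀ x (w : ℓ'), symp n (φ x) w = -(x ⬝ᵥ L w) := by
    intro x w
    have := LinearMap.pi_apply_eq_sum_univ ((sympBilin n).flip w ∘ₗ ℓ.subtype ∘ₗ φ.toLinearMap) x
    simp only [LinearMap.comp_apply, LinearMap.flip_apply, sympBilin_apply,
      Submodule.subtype_apply, LinearEquiv.coe_coe] at this
    rw [this, dotProduct, ← Finset.sum_neg_distrib]
    refine Finset.sum_congr rfl fun i _ => ?_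
    have hsingle : (fun j => if i = j then (1 : ℝ) else 0) = Pi.single i 1 :=
      funext fun j => by simp [Pi.single_apply, eq_comm]
    simp [L, hsingle]
  have hinj : Function.Injective L := by
    refine (injective_iff_map_eq_zero L).mpr fun w hw => Subtype.ext ?_
    refine eq_zero_of_forall_symp_eq_zero hℓ hℓ' htrans w.2 fun z hz => ?_
    simpa [hw] using hL (φ.symm ⟨z, hz⟩) w
  have hdim : Module.finrank ℝ ℓ' = Module.finrank ℝ (Fin n → ℝ) := by
    rw [hℓ'.1, Module.finrank_fin_fun]
  refine ⟨(LinearMap.linearEquivOfInjective L hinj hdim).symm, fun x p => ?_⟩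
  rw [hL]
  exact congrArg (fun v => -(x ⬝ᵥ v)) ((L.linearEquivOfInjective hinj hdim).apply_symm_apply p)

end IsLagrangian

theorem QuadraticMap.PosDef.exists_linearEquiv_eq_dotProduct_self {V : Type*} [AddCommGroup V]
    [Module ℝ V] [FiniteDimensional ℝ V] {q : QuadraticForm ℝ V} (hq : q.PosDef) {n : ℕ}
    (hn : Module.finrank ℝ V = n) : ∃ φ : (Fin n → ℝ) ≃ₗ[ℝ] V, ∀ x, q (φ x) = x ⬝ᵥ x := by
  subst hn
  obtain ⟨w, hw, ⟨ι⟩⟩ := q.equivalent_one_neg_one_weighted_sum_squared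
    (separatingLeft_of_anisotropic q hq.anisotropic)
  have hq_apply : ∀ x, q (ι.symm x) = ∑ i, w i * (x i * x i) := fun x => by
    rw [ι.symm.map_app, weightedSumSquares_apply]; rfl
  have hw1 : ∀ i, w i = 1 := fun i => by
    have := hq (ι.symm (Pi.single i 1)) (by simp)
    rw [hq_apply, Finset.sum_eq_single i (fun j _ hj => by simp [hj]) (by simp)] at this
    simp only [Pi.single_eq_same, mul_one] at this
    exact (hw i).resolve_left (by linarith)
  exact ⟨ι.symm.toLinearEquiv, fun x => by simp [hq_apply, hw1, dotProduct]⟩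

def ballProd (n : ℕ) (ℏ : ℝ) : Set (PS n) :=
  {z | z ∘ Sum.inl ⬝ᵥ z ∘ Sum.inl ≤ ℏ ∧ z ∘ Sum.inr ⬝ᵥ z ∘ Sum.inr ≤ ℏ}

theorem ball2n_subset_ballProd (n : ℕ) (ℏ : ℝ) : ball2n n ℏ ⊆ ballProd n ℏ := fun z hz => by
  have hz : z ∘ Sum.inl ⬝ᵥ z ∘ Sum.inl + z ∘ Sum.inr ⬝ᵥ z ∘ Sum.inr ≤ ℏ := by
    simpa [ball2n, dotProduct, Fintype.sum_sum_type] using hz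
  have := dotProduct_self_star_nonneg (z ∘ Sum.inl)
  have := dotProduct_self_star_nonneg (z ∘ Sum.inr)
  simp only [star_trivial] at *
  exact ⟨by linarith, by linarith⟩

theorem sq_le_of_mem_ballProd {n : ℕ} {ℏ : ℝ} {z : PS n} (hz : z ∈ ballProd n ℏ)
    (k : Fin n ⊕ Fin n) : z k ^ 2 ≤ ℏ := by
  cases k with
  | inl i => exact (sq_le_dotProduct_self (z ∘ Sum.inl) i).trans hz.1
  | inr i => exact (sq_le_dotProduct_self (z ∘ Sum.inr) i).trans hz.2

theorem lagDual_image_ball_eq {n : ℕ} {ℏ : ℝ} (hℏ : 0 < ℏ) {ℓ' : Submodule ℝ (PS n)}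
    (φ : (Fin n → ℝ) → PS n) (ψ : (Fin n → ℝ) ≃ₗ[ℝ] ℓ')
    (hψ : ∀ x p, symp n (φ x) (ψ p) = -(x ⬝ᵥ p)) :
    lagDual n ℏ ℓ' (φ '' {x | x ⬝ᵥ x ≤ ℏ}) = (fun p => (ψ p : PS n)) '' {p | p ⬝ᵥ p ≤ ℏ} := by
  ext w
  constructor
  · rintro ⟨hw, hdual⟩
    refine ⟨ψ.symm ⟨w, hw⟩, (forall_dotProduct_le_iff hℏ _).mp fun x hx => ?_, by simp⟩
    have := hdual _ ⟨-x, by simpa using hx, rfl⟩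
    rwa [show w = ψ (ψ.symm ⟨w, hw⟩) by simp, hψ, neg_dotProduct, neg_neg] at this
  · rintro ⟨p, hp, rfl⟩
    refine ⟨(ψ p).2, ?_⟩
    rintro _ ⟨x, hx, rfl⟩
    rw [hψ, ← neg_dotProduct]
    exact (forall_dotProduct_le_iff hℏ p).mpr hp (-x) (by simpa using hx)

theorem exists_mem_Sp_image_ballProd_eq {n : ℕ} {ℏ : ℝ} (hℏ : 0 < ℏ) {ℓ ℓ' : Submodule ℝ (PS n)}
    (hℓ : IsLagrangian n ℓ) (hℓ' : IsLagrangian n ℓ') (htrans : ℓ ⊓ ℓ' = ⊥)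
    {q : QuadraticForm ℝ ℓ} (hq : q.PosDef) :
    ∃ S ∈ Sp n, S.mulVec '' ballProd n ℏ =
      (↑) '' {v : ℓ | q v ≤ ℏ} + lagDual n ℏ ℓ' ((↑) '' {v : ℓ | q v ≤ ℏ}) := by
  obtain ⟨φ, hφ⟩ := hq.exists_linearEquiv_eq_dotProduct_self hℓ.1
  obtain ⟨ψ, hψ⟩ := hℓ.exists_linearEquiv_symp_eq_neg_dotProduct hℓ' htrans φ
  have hX : (↑) '' {v : ℓ | q v ≤ ℏ} = (fun x => (φ x : PS n)) '' {x | x ⬝ᵥ x ≤ ℏ} := by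
    ext z
    constructor
    · rintro ⟨v, hv, rfl⟩
      exact ⟨φ.symm v, by simpa [← hφ] using hv, by simp⟩
    · rintro ⟨x, hx, rfl⟩
      exact ⟨φ x, by simpa [hφ] using hx, rfl⟩
  let T : PS n →ₗ[ℝ] PS n :=
    ℓ.subtype ∘ₗ φ.toLinearMap ∘ₗ LinearMap.funLeft ℝ ℝ Sum.inl +
      ℓ'.subtype ∘ₗ ψ.toLinearMap ∘ₗ LinearMap.funLeft ℝ ℝ Sum.inr
  have hT : ∀ z, LinearMap.toMatrix' T *ᵥ z = φ (z ∘ Sum.inl) + ψ (z ∘ Sum.inr) := fun z => by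
    rw [LinearMap.toMatrix'_mulVec]; rfl
  refine ⟨LinearMap.toMatrix' T, mem_Sp_of_forall_symp_mulVec fun z z' => ?_, ?_⟩
  · rw [hT, hT, ← sympBilin_apply]
    simp only [map_add, LinearMap.add_apply, sympBilin_apply]
    rw [hℓ.2 _ (φ _).2 _ (φ _).2, hℓ'.2 _ (ψ _).2 _ (ψ _).2, hψ, symp_swap, hψ,
      symp_eq_dotProduct_s14, dotProduct_comm (z ∘ Sum.inr)]
    ring
  · rw [hX, lagDual_image_ball_eq hℏ _ ψ hψ]
    ext w
    constructor
    · rintro ⟨z, ⟨hx, hp⟩, rfl⟩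
      rw [hT]
      exact Set.add_mem_add ⟨_, hx, rfl⟩ ⟨_, hp, rfl⟩
    · rintro ⟨_, ⟨x, hx, rfl⟩, _, ⟨p, hp, rfl⟩, rfl⟩
      exact ⟨Sum.elim x p, ⟨hx, hp⟩, by rw [hT]; rfl⟩

/-- The convex set K = X_ℓ + (X_ℓ)_{ℓ′}^ℏ contains a quantum blob, and any centered
ellipsoid contained in K has volume at most that of B^{2n}(√ℏ) (so a quantum blob is a
John ellipsoid of K). -/
theorem john_ellipsoid_of_lagrangian_product (n : ℕ) (ℏ : ℝ) (hℏ : 0 < ℏ)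
    (ℓ ℓ' : Submodule ℝ (PS n))
    (hℓ : IsLagrangian n ℓ) (hℓ' : IsLagrangian n ℓ') (htrans : ℓ ⊓ ℓ' = ⊥)
    (Xl : Set (PS n))
    (hXl : ∃ q : QuadraticForm ℝ ℓ, q.PosDef ∧
      Xl = ((↑) : ℓ → PS n) '' {v : ℓ | q v ≤ ℏ}) :
    (∃ S ∈ Sp n, S.mulVec '' ball2n n ℏ ⊆ Xl + lagDual n ℏ ℓ' Xl) ∧
    (∀ Q : Matrix (Fin n ⊕ Fin n) (Fin n ⊕ Fin n) ℝ, Q.PosDef →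
      {z : PS n | Q.mulVec z ⬝ᵥ z ≤ ℏ} ⊆ Xl + lagDual n ℏ ℓ' Xl →
      volume {z : PS n | Q.mulVec z ⬝ᵥ z ≤ ℏ} ≤ volume (ball2n n ℏ)) := by
  obtain ⟨q, hq, rfl⟩ := hXl
  obtain ⟨S, hS, hK⟩ := exists_mem_Sp_image_ballProd_eq hℏ hℓ hℓ' htrans hq
  rw [← hK]
  refine ⟨⟨S, hS, Set.image_mono (ball2n_subset_ballProd n ℏ)⟩, fun Q hQ hsub => ?_⟩
  have hdetS := det_mul_self_eq_one_of_mem_Sp hS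
  have hSinj : Function.Injective S.mulVec := mulVec_injective_iff_isUnit.mpr <|
    (isUnit_iff_isUnit_det S).mpr (isUnit_iff_ne_zero.mpr (left_ne_zero_of_mul_eq_one hdetS))
  have hM : 1 ≤ (Sᵀ * Q * S).det := by
    refine (by simpa using hQ.conjTranspose_mul_mul_same hSinj : (Sᵀ * Q * S).PosDef)
      |>.one_le_det_of_ellipsoid_subset_cube hℏ fun w hw => ?_
    rw [transpose_mul_mul_mulVec_dotProduct] at hw
    obtain ⟨z, hz, hzw⟩ := hsub hw
    exact sq_le_of_mem_ballProd (hSinj hzw ▸ hz)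
  refine volume_ellipsoid_le_of_one_le_det ℏ hQ.posSemidef ?_
  rwa [det_mul, det_mul, det_transpose, mul_right_comm, hdetS, one_mul] at hM
end
end
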